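/- The subgroup K contains the third term γ₃(G) of the lower central series of G. -/

import Mathlib

open Equiv

/-! ## The binary rooted tree and the twisted twin of the Grigorchuk group

We identify the vertex set of the infinite rooted binary tree with `V = List Bool`
(the free monoid `X*` on `X = {0,1}`), and realize automorphisms of the tree as
permutations of `V`.  The generators `a, b, c, d` of the twisted twin `G` of the
Grigorchuk group are defined by the recursive rules
`a(xw) = (¬x)w`, `ψ(b) = (c,a)`, `ψ(c) = (a,d)`, `ψ(d) = (1,b)`. -/

abbrev V : Type := List Bool

def actA : V → V
  | [] => []
  | x :: w => (!x) :: w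

theorem actA_invol : Function.Involutive actA := fun w => by
  cases w with
  | nil => rfl
  | cons x w => simp [actA]

mutual
  def actB : V → V
    | [] => []
    | false :: w => false :: actC w
    | true :: w => true :: actA w
  def actC : V → V
    | [] => []
    | false :: w => false :: actA w
    | true :: w => true :: actD w
  def actD : V → V
    | [] => []
    | false :: w => false :: w
    | true :: w => true :: actB w
end

theorem act_invol3 (w : V) :
    actB (actB w) = w ∧ actC (actC w) = w ∧ actD (actD w) = w := by
  induction w with
  | nil => exact ⟨rfl, rfl, rfl⟩
  | cons x w ih =>
    cases x <;>
      exact ⟨by simp [actB, actC, actD, ih.1, ih.2.1, ih.2.2, actA_invol w],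
        by simp [actB, actC, actD, ih.1, ih.2.1, ih.2.2, actA_invol w],
        by simp [actB, actC, actD, ih.1, ih.2.1, ih.2.2, actA_invol w]⟩

theorem actB_invol : Function.Involutive actB := fun w => (act_invol3 w).1
theorem actC_invol : Function.Involutive actC := fun w => (act_invol3 w).2.1
theorem actD_invol : Function.Involutive actD := fun w => (act_invol3 w).2.2

/-- The generator `a`: the root swap. -/
def a : Perm V := actA_invol.toPerm actA
/-- The generator `b`, with `ψ(b) = (c, a)`. -/
def b : Perm V := actB_invol.toPerm actB
/-- The generator `c`, with `ψ(c) = (a, d)`. -/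
def c : Perm V := actC_invol.toPerm actC
/-- The generator `d`, with `ψ(d) = (1, b)`. -/
def d : Perm V := actD_invol.toPerm actD

@[simp] theorem coe_a : ⇑a = actA := rfl
@[simp] theorem coe_b : ⇑b = actB := rfl
@[simp] theorem coe_c : ⇑c = actC := rfl
@[simp] theorem coe_d : ⇑d = actD := rfl

/-- The twisted twin of the Grigorchuk group. -/
def G : Subgroup (Perm V) := Subgroup.closure {a, b, c, d}

theorem a_mem_G : a ∈ G := Subgroup.subset_closure (by simp)
theorem b_mem_G : b ∈ G := Subgroup.subset_closure (by simp)
theorem c_mem_G : c ∈ G := Subgroup.subset_closure (by simp)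
theorem d_mem_G : d ∈ G := Subgroup.subset_closure (by simp)

/-- `hasState g v s` says that the state (section) of `g` at the vertex `v` is `s`,
i.e. `g (v ++ w) = g v ++ s w` for all `w`. -/
def hasState (g : Perm V) (v : V) (s : Perm V) : Prop :=
  ∀ w : V, g (v ++ w) = g v ++ s w

def vstarFun (v : V) (f : V → V) : V → V :=
  fun w => if v <+: w then v ++ f (w.drop v.length) else w

theorem vstarFun_comp (v : V) (f f' : V → V) (w : V) :
    vstarFun v f (vstarFun v f' w) = vstarFun v (f ∘ f') w := by
  by_cases h : v <+: w
  · obtain ⟨t, rfl⟩ := h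
    simp [vstarFun, List.prefix_append, List.drop_left]
  · simp [vstarFun, h]

theorem vstarFun_id (v w : V) : vstarFun v id w = w := by
  by_cases h : v <+: w
  · obtain ⟨t, rfl⟩ := h
    simp [vstarFun, List.prefix_append, List.drop_left]
  · simp [vstarFun, h]

/-- `vstar v g` is the automorphism `v * g`, acting as `g` on the subtree rooted
at `v` and trivially elsewhere. -/
def vstar (v : V) (g : Perm V) : Perm V where
  toFun := vstarFun v g
  invFun := vstarFun v g.symm
  left_inv := fun w => by
    rw [vstarFun_comp, Equiv.symm_comp_self]
    exact vstarFun_id v w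
  right_inv := fun w => by
    rw [vstarFun_comp, Equiv.self_comp_symm]
    exact vstarFun_id v w

/-- `XstarSub n H` is the subgroup `Xⁿ * H`: the product of the copies `v * H`
over all vertices `v` of level `n` (equivalently, the subgroup they generate). -/
def XstarSub (n : ℕ) (H : Subgroup (Perm V)) : Subgroup (Perm V) :=
  Subgroup.closure {p | ∃ v : V, ∃ g : Perm V, v.length = n ∧ g ∈ H ∧ p = vstar v g}

/-- `pairPerm s₀ s₁ = ψ⁻¹(s₀, s₁)`: the first-level stabilizer element whose states
at the vertices `0` and `1` are `s₀` and `s₁`. -/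
def pairPerm (s₀ s₁ : Perm V) : Perm V := vstar [false] s₀ * vstar [true] s₁

/-- The permutations fixing every vertex of level `n`. -/
def stabLevel (n : ℕ) : Subgroup (Perm V) where
  carrier := {g : Perm V | ∀ v : V, v.length = n → g v = v}
  one_mem' := fun _ _ => rfl
  mul_mem' := by
    intro g h hg hh v hv
    show g (h v) = v
    rw [hh v hv, hg v hv]
  inv_mem' := by
    intro g hg v hv
    show g⁻¹ v = v
    conv_lhs => rw [← hg v hv]
    exact g.symm_apply_apply v

/-- The `n`-th level stabilizer `Stab_G(n)` of `G`. -/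
def stabG (n : ℕ) : Subgroup (Perm V) := G ⊓ stabLevel n

/-- The commutator `[x, y] = x⁻¹ y⁻¹ x y` (paper convention). -/
def pc (x y : Perm V) : Perm V := x⁻¹ * y⁻¹ * x * y
/-- Conjugation `xʸ = y⁻¹ x y`. -/
def cj (x y : Perm V) : Perm V := y⁻¹ * x * y

/-- The normal closure in `G` of a subset `S` of `G`. -/
def ncl (S : Set (Perm V)) : Subgroup (Perm V) :=
  Subgroup.closure {x | ∃ s ∈ S, ∃ g ∈ G, x = g⁻¹ * s * g}

/-- `K = ⟨[a,b],[b,c],[b,d],[c,d], bcd⟩^G`. -/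
def K : Subgroup (Perm V) := ncl {pc a b, pc b c, pc b d, pc c d, b * c * d}

/-- The subgroup `[K, G]`. -/
def KG : Subgroup (Perm V) := ⁅K, G⁆

/-- The subgroup `C`, generated by `[K,G]` and `[a,b][b,c]`. -/
def Csub : Subgroup (Perm V) := KG ⊔ Subgroup.closure {pc a b * pc b c}

/-- `γ_n(G)`, the `n`-th term of the lower central series of `G` (starting at `γ₁ = G`),
viewed as a subgroup of `Perm V`. -/
def gammaG (n : ℕ) : Subgroup (Perm V) :=
  Subgroup.map G.subtype (Subgroup.lowerCentralSeries (⊤ : Subgroup ↥G) (n - 1))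

/-!
Modulo `K`, the generator `b` commutes with `a` and `d`, and `c ≡ b⁻¹ d⁻¹`, so `G/K` is
generated by `a`, `b`, `d` with `b` central. Already in `G` the involutions `a` and `d` satisfy
`(ad)⁴ = 1`, because `(ad)²` acts as `b` below both vertices of the first level. Hence
`[a, d] = (ad)²` is inverted by conjugation with `a` and with `d`, i.e. it is central in `G/K`,
and a group whose generators have central commutators has class at most two: `γ₃(G) ≤ K`.
-/

open Subgroup
open scoped commutatorElement

section ClassTwo

variable {Q : Type*} [Group Q]

theorem commutator_le_center_of_closure_eq_top {S : Set Q} (hS : closure S = ⊤)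
    (h : ∀ s ∈ S, ∀ t ∈ S, ⁅s, t⁆ ∈ center Q) : commutator Q ≤ center Q := by
  set f := QuotientGroup.mk' (center Q)
  have hcomm : ∀ x ∈ f '' S, ∀ y ∈ f '' S, x * y = y * x := by
    rintro _ ⟨s, hs, rfl⟩ _ ⟨t, ht, rfl⟩
    rw [← commutatorElement_eq_one_iff_mul_comm, ← map_commutatorElement, QuotientGroup.mk'_apply,
      QuotientGroup.eq_one_iff]
    exact h s hs t ht
  have htop : closure (f '' S) = ⊤ := by
    rw [← MonoidHom.map_closure, hS, map_top_of_surjective f (QuotientGroup.mk'_surjective _)]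
  have := isMulCommutative_closure hcomm
  rw [commutator_def, commutator_le]
  rintro x - y -
  rw [← QuotientGroup.eq_one_iff, ← QuotientGroup.mk'_apply, map_commutatorElement,
    commutatorElement_eq_one_iff_mul_comm]
  exact setLike_mul_comm (htop ▸ mem_top (f x)) (htop ▸ mem_top (f y))

theorem commute_sq_of_conj_eq_inv {g z : Q} (h : g * z * g⁻¹ = z⁻¹) (hz : z ^ 4 = 1) :
    Commute g (z ^ 2) := by
  have hz2 : (z ^ 2)⁻¹ = z ^ 2 := inv_eq_of_mul_eq_one_left (by rw [← pow_add, hz])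
  rw [commute_iff_eq, ← mul_inv_eq_iff_eq_mul, ← conj_pow, h, inv_pow, hz2]

theorem commutator_le_center_of_dihedral {A B D : Q} (hgen : closure {A, B, D} = ⊤)
    (hA : A * A = 1) (hD : D * D = 1) (hAD : (A * D) ^ 4 = 1) (hAB : Commute A B)
    (hBD : Commute B D) : commutator Q ≤ center Q := by
  have hA' : A⁻¹ = A := inv_eq_of_mul_eq_one_left hA
  have hD' : D⁻¹ = D := inv_eq_of_mul_eq_one_left hD
  have hcent : ⁅A, D⁆ ∈ center Q := by
    rw [commutatorElement_def, hA', hD', mul_assoc (A * D), ← sq, center_eq_iInf hgen]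
    simp only [mem_iInf, Set.mem_insert_iff, Set.mem_singleton_iff, forall_eq_or_imp, forall_eq,
      mem_centralizer_singleton_iff]
    refine ⟨?_, ?_, ?_⟩
    · refine (commute_sq_of_conj_eq_inv ?_ hAD).symm.eq
      rw [mul_inv_rev, hA', hD', ← mul_assoc, hA, one_mul]
    · exact ((hAB.symm.mul_right hBD).pow_right 2).eq.symm
    · refine (commute_sq_of_conj_eq_inv ?_ hAD).symm.eq
      rw [mul_inv_rev, hA', hD', mul_assoc, mul_assoc, hD, mul_one]
  have hcentral_of_commute {x y : Q} (h : Commute x y) : ⁅x, y⁆ ∈ center Q := by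
    rw [h.commutator_eq]; exact one_mem _
  refine commutator_le_center_of_closure_eq_top hgen ?_
  simp only [Set.mem_insert_iff, Set.mem_singleton_iff, forall_eq_or_imp, forall_eq]
  exact ⟨⟨hcentral_of_commute (.refl _), hcentral_of_commute hAB, hcent⟩,
    ⟨hcentral_of_commute hAB.symm, hcentral_of_commute (.refl _), hcentral_of_commute hBD⟩,
    ⟨commutatorElement_inv A D ▸ inv_mem hcent, hcentral_of_commute hBD.symm,
      hcentral_of_commute (.refl _)⟩⟩

theorem lowerCentralSeries_two_le_of_commutator_le_center {Γ : Type*} [Group Γ] (N : Subgroup Γ)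
    [N.Normal] (h : commutator (Γ ⧸ N) ≤ center (Γ ⧸ N)) :
    (⊤ : Subgroup Γ).lowerCentralSeries 2 ≤ N := by
  rw [← QuotientGroup.ker_mk' N, ← Subgroup.map_eq_bot_iff, Subgroup.map_lowerCentralSeries,
    ← MonoidHom.range_eq_map, QuotientGroup.range_mk', Subgroup.lowerCentralSeries_succ,
    Subgroup.top_lowerCentralSeries_one, commutator_top_right_eq_bot_iff_le_center]
  exact h

end ClassTwo

theorem a_mul_d_sq_apply_cons (x : Bool) (w : V) : ((a * d) ^ 2) (x :: w) = x :: actB w := by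
  cases x <;> simp [sq, actA, actD]

theorem a_mul_d_pow_four : (a * d) ^ 4 = 1 := by
  refine Equiv.ext fun v => ?_
  cases v with
  | nil => rfl
  | cons x w =>
    rw [show 4 = 2 * 2 from rfl, pow_mul, sq, Perm.mul_apply, a_mul_d_sq_apply_cons,
      a_mul_d_sq_apply_cons, actB_invol, Perm.one_apply]

theorem mul_mul_inv_mem_ncl {S : Set (Perm V)} {x g : Perm V} (hx : x ∈ ncl S) (hg : g ∈ G) :
    g * x * g⁻¹ ∈ ncl S := by
  have : (ncl S).map (MulAut.conj g).toMonoidHom ≤ ncl S := by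
    rw [ncl, MonoidHom.map_closure, closure_le]
    rintro _ ⟨_, ⟨s, hs, h, hh, rfl⟩, rfl⟩
    exact subset_closure ⟨s, hs, h * g⁻¹, mul_mem hh (inv_mem hg), by simp [mul_assoc]⟩
  exact this ⟨x, hx, rfl⟩

instance : (K.subgroupOf G).Normal :=
  ⟨fun _ hx g => mem_subgroupOf.2 (mul_mul_inv_mem_ncl (mem_subgroupOf.1 hx) g.2)⟩

theorem mem_K_of_mem {s : Perm V}
    (hs : s ∈ ({pc a b, pc b c, pc b d, pc c d, b * c * d} : Set (Perm V))) : s ∈ K :=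
  subset_closure ⟨s, hs, 1, one_mem G, by simp⟩

def aG : G := ⟨a, a_mem_G⟩
def bG : G := ⟨b, b_mem_G⟩
def cG : G := ⟨c, c_mem_G⟩
def dG : G := ⟨d, d_mem_G⟩

theorem closure_generators_eq_top : closure ({aG, bG, cG, dG} : Set G) = ⊤ := by
  apply map_injective G.subtype_injective
  rw [MonoidHom.map_closure, ← MonoidHom.range_eq_map, range_subtype]
  simp only [Set.image_insert_eq, Set.image_singleton, coe_subtype]
  rfl

abbrev GModK : Type := G ⧸ K.subgroupOf G

namespace GModK

theorem commute_of_pc_mem_K {x y : G} (h : pc x y ∈ K) : Commute (x : GModK) (y : GModK) := by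
  have h1 : ((x⁻¹ * y⁻¹ * x * y : G) : GModK) = 1 := (QuotientGroup.eq_one_iff _).2 h
  rw [← Commute.inv_inv_iff, ← commutatorElement_eq_one_iff_commute, commutatorElement_def,
    inv_inv, inv_inv]
  simpa only [QuotientGroup.mk_mul, QuotientGroup.mk_inv] using h1

theorem mk_eq_one {x : G} (h : (x : Perm V) = 1) : (x : GModK) = 1 := by
  rw [(Subtype.ext h : x = 1), QuotientGroup.mk_one]

theorem closure_a_b_d_eq_top : closure ({(↑aG : GModK), ↑bG, ↑dG} : Set GModK) = ⊤ := by
  have hc : (cG : GModK) = (bG : GModK)⁻¹ * (dG : GModK)⁻¹ := by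
    have h : ((bG * cG * dG : G) : GModK) = 1 :=
      (QuotientGroup.eq_one_iff _).2 (mem_K_of_mem (by simp) : b * c * d ∈ K)
    rw [QuotientGroup.mk_mul, QuotientGroup.mk_mul, mul_eq_one_iff_eq_inv] at h
    exact eq_inv_mul_of_mul_eq h
  have hgen : closure ({(↑aG : GModK), ↑bG, ↑cG, ↑dG} : Set GModK) = ⊤ := by
    rw [← map_top_of_surjective _ (QuotientGroup.mk'_surjective (K.subgroupOf G)),
      ← closure_generators_eq_top, MonoidHom.map_closure]
    simp [Set.image_insert_eq]
  have mem {x : GModK} (hx : x ∈ ({(↑aG : GModK), ↑bG, ↑dG} : Set GModK)) :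
      x ∈ closure ({(↑aG : GModK), ↑bG, ↑dG} : Set GModK) :=
    subset_closure hx
  rw [eq_top_iff, ← hgen, closure_le]
  simp only [Set.insert_subset_iff, Set.singleton_subset_iff, SetLike.mem_coe]
  exact ⟨mem (by simp), mem (by simp), hc ▸ mul_mem (inv_mem (mem (by simp)))
    (inv_mem (mem (by simp))), mem (by simp)⟩

end GModK

/-- **Proposition.** `K` contains `γ₃(G)`. -/
theorem stmt4 : gammaG 3 ≤ K := by
  have hA : (aG : GModK) * aG = 1 := by
    rw [← QuotientGroup.mk_mul]; exact GModK.mk_eq_one (Equiv.ext actA_invol)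
  have hD : (dG : GModK) * dG = 1 := by
    rw [← QuotientGroup.mk_mul]; exact GModK.mk_eq_one (Equiv.ext actD_invol)
  have hAD : ((aG : GModK) * dG) ^ 4 = 1 := by
    rw [← QuotientGroup.mk_mul, ← QuotientGroup.mk_pow]; exact GModK.mk_eq_one a_mul_d_pow_four
  have hQ : commutator GModK ≤ center GModK :=
    commutator_le_center_of_dihedral GModK.closure_a_b_d_eq_top hA hD hAD
      (GModK.commute_of_pc_mem_K (mem_K_of_mem (by simp) : pc a b ∈ K))
      (GModK.commute_of_pc_mem_K (mem_K_of_mem (by simp) : pc b d ∈ K))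
  rw [gammaG, Subgroup.map_le_iff_le_comap]
  exact lowerCentralSeries_two_le_of_commutator_le_center (K.subgroupOf G) hQ
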